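/- arXiv:math/0207209 — 2 statements merged into one kernel-verified Lean document; each statement's English description precedes it below -/
import Mathlib

section
/- Let α, N be coprime naturals with (α-1) ∣ N, let S₁ = min(α, ⌊N/(α+1)⌋), and define π(i) = α·i + β mod N with β = ⌊(α-1)/2⌋. Then for all i ≠ j in {1,...,N}, if the circular distance |(i - j) mod N| ≤ S₁, then the circular distance |(π(i) - π(j)) mod N| ≥ S₁. -/
/-- Circular distance of an integer `x` modulo `N`:
`min (x mod N, N - (x mod N))`. -/
def circDist (x : ℤ) (N : ℕ) : ℤ := min (x % N) (N - x % N)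

lemma circDist_congr (x y : ℤ) (N : ℕ) (h : x % N = y % N) :
    circDist x N = circDist y N := by
  unfold circDist; rw [h]

lemma circDist_key (N α S₁ : ℕ) (hS₁ : S₁ = min α (N / (α + 1)))
    (x : ℤ) (hx1 : 1 ≤ x % N) (hx2 : x % N ≤ S₁) :
    (S₁ : ℤ) ≤ circDist ((α : ℤ) * x) N := by
  set q : ℕ := N / (α + 1) with hq
  have hS₁α : S₁ ≤ α := hS₁ ▸ min_le_left _ _
  have hS₁q : S₁ ≤ q := hS₁ ▸ min_le_right _ _
  have hS₁pos : 1 ≤ S₁ := by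
    by_contra h
    have : S₁ = 0 := by omega
    rw [this] at hx2
    omega
  have hqN : (α + 1) * q ≤ N := Nat.mul_div_le N (α+1)
  have hqpos : 1 ≤ q := le_trans hS₁pos hS₁q
  set d : ℤ := x % N with hd
  have hαd1 : (S₁ : ℤ) ≤ (α : ℤ) * d := by
    calc (S₁ : ℤ) ≤ (α : ℤ) := by exact_mod_cast hS₁α
    _ = (α : ℤ) * 1 := by ring
    _ ≤ (α : ℤ) * d := by
        apply mul_le_mul_of_nonneg_left hx1 (by positivity)
  have hαd2 : (α : ℤ) * d ≤ (α : ℤ) * q := by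
    apply mul_le_mul_of_nonneg_left _ (by positivity)
    calc d ≤ (S₁ : ℤ) := hx2
    _ ≤ (q : ℤ) := by exact_mod_cast hS₁q
  have hqNz : ((α : ℤ) + 1) * q ≤ N := by exact_mod_cast hqN
  have hq1 : (1 : ℤ) ≤ q := by exact_mod_cast hqpos
  have hemod : ((α : ℤ) * x) % N = (α : ℤ) * d := by
    have h1 : ((α : ℤ) * x) % N = ((α : ℤ) * (x % N)) % N := by
      rw [Int.mul_emod (α : ℤ) x, Int.mul_emod (α : ℤ) (x % N),
        Int.emod_emod_of_dvd _ dvd_rfl]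
    rw [h1, ← hd]
    exact Int.emod_eq_of_lt (mul_nonneg (by positivity) (by linarith)) (by linarith)
  unfold circDist
  rw [hemod]
  have hS₁qz : (S₁ : ℤ) ≤ q := by exact_mod_cast hS₁q
  exact le_min hαd1 (by linarith)

lemma emod_neg_eq (x : ℤ) (N : ℕ) (hN : 1 ≤ N) (h : 1 ≤ x % N) :
    (-x) % N = N - x % N := by
  have hNz : (0 : ℤ) < N := by exact_mod_cast hN
  have hlt : x % N < N := Int.emod_lt_of_pos x hNz
  have hdvd : (N : ℤ) ∣ (-x - ((N : ℤ) - x % N)) := by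
    refine ⟨-(x / N) - 1, ?_⟩
    have := Int.emod_add_mul_ediv x N
    ring_nf
    linarith
  have h2 : (-x) % N = ((N : ℤ) - x % N) % N :=
    Int.emod_eq_emod_iff_emod_sub_eq_zero.mpr (Int.emod_eq_zero_of_dvd hdvd)
  rw [h2, Int.emod_eq_of_lt (by linarith) (by linarith)]

theorem stmt1 (N α : ℕ) (hN : 1 ≤ N) (hcop : Nat.Coprime α N)
    (hdvd : (α - 1) ∣ N)
    (S₁ : ℕ) (hS₁ : S₁ = min α (N / (α + 1)))
    (β : ℕ) (hβ : β = (α - 1) / 2)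
    (π : ℕ → ℕ) (hπ : ∀ i, π i = (α * i + β) % N) :
    ∀ i ∈ Finset.Icc 1 N, ∀ j ∈ Finset.Icc 1 N, i ≠ j →
      circDist ((i : ℤ) - j) N ≤ S₁ →
      S₁ ≤ circDist ((π i : ℤ) - π j) N := by
  intro i hi j hj hne hle
  simp only [Finset.mem_Icc] at hi hj
  have hNz : (0 : ℤ) < N := by exact_mod_cast hN
  -- the difference of images is α*(i-j) mod N
  have hmod : ((π i : ℤ) - π j) % N = ((α : ℤ) * ((i : ℤ) - j)) % N := by
    rw [hπ i, hπ j]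
    push_cast
    rw [← Int.sub_emod]
    congr 1
    ring
  set d : ℤ := ((i : ℤ) - j) % N with hd
  have hd0 : 0 ≤ d := Int.emod_nonneg _ (by positivity)
  have hdlt : d < N := Int.emod_lt_of_pos _ hNz
  have hdne : d ≠ 0 := by
    intro h
    have hdvd' : (N : ℤ) ∣ ((i : ℤ) - j) := Int.dvd_of_emod_eq_zero h
    have : ((i : ℤ) - j) = 0 := by
      refine Int.eq_zero_of_abs_lt_dvd hdvd' ?_
      rw [abs_lt]
      constructor <;> [push_cast; push_cast] <;> omega
    apply hne
    have : (i : ℤ) = j := by linarith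
    exact_mod_cast this
  have hd1 : 1 ≤ d := by omega
  unfold circDist at hle
  rw [← hd] at hle
  rcases le_or_gt d (S₁ : ℤ) with hcase | hcase
  · -- d ≤ S₁
    rw [circDist_congr _ _ _ hmod]
    exact circDist_key N α S₁ hS₁ _ (hd ▸ hd1) (hd ▸ hcase)
  · -- N - d ≤ S₁; use the negated difference
    have hle' : (N : ℤ) - d ≤ S₁ := by
      rcases min_le_iff.mp hle with h | h
      · omega
      · exact h
    have hmod' : ((π i : ℤ) - π j) % N = (-((α : ℤ) * ((j : ℤ) - i))) % N := by
      rw [hmod]; ring_nf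
    have hji : ((j : ℤ) - i) % N = N - d := by
      have := emod_neg_eq ((i : ℤ) - j) N hN (hd ▸ hd1)
      rw [← hd] at this
      rw [← this]; ring_nf
    have hnd1 : 1 ≤ ((j : ℤ) - i) % N := by rw [hji]; omega
    have hnd2 : ((j : ℤ) - i) % N ≤ S₁ := by rw [hji]; exact hle'
    have hmod'' : ((π i : ℤ) - π j) % N = ((α : ℤ) * ((j : ℤ) - i)) % N ∨ True := Or.inr trivial
    -- circDist of negation equals circDist
    have hαji := circDist_key N α S₁ hS₁ ((j : ℤ) - i) hnd1 hnd2
    -- relate circDist (π i - π j) to circDist (α*(j-i))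
    have hkey : circDist ((π i : ℤ) - π j) N = circDist ((α : ℤ) * ((j : ℤ) - i)) N := by
      unfold circDist
      rw [hmod']
      rcases eq_or_lt_of_le (Int.emod_nonneg ((α : ℤ) * ((j : ℤ) - i)) (by positivity)) with h0 | h0
      · rw [← h0]
        have : (-((α : ℤ) * ((j : ℤ) - i))) % N = 0 := by
          rw [Int.emod_eq_zero_of_dvd]
          exact Dvd.dvd.neg_right (Int.dvd_of_emod_eq_zero h0.symm)
        rw [this]
      · rw [emod_neg_eq _ _ hN (by omega)]
        have hlt' : ((α : ℤ) * ((j : ℤ) - i)) % N < N := Int.emod_lt_of_pos _ hNz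
        omega
    rw [hkey]
    exact hαji
end

section
/- Let α, N be coprime naturals with (α-1) ∣ N, β = ⌊(α-1)/2⌋, S₂ = ⌊(α-1)/2⌋, and π(i) = α·i + β mod N. Then for every i, the circular distance |(i - π(i)) mod N| ≥ S₂. -/
theorem stmt2 (N α : ℕ) (hN : 1 ≤ N) (hcop : Nat.Coprime α N)
    (hdvd : (α - 1) ∣ N)
    (S₂ β : ℕ) (hβ : β = (α - 1) / 2) (hS₂ : S₂ = (α - 1) / 2)
    (π : ℕ → ℕ) (hπ : ∀ i, π i = (α * i + β) % N) :
    ∀ i : ℕ, (S₂ : ℤ) ≤ circDist ((i : ℤ) - (π i : ℤ)) N := by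
  intro i
  have hSβ : S₂ = β := by rw [hS₂, hβ]
  have hNpos : (0:ℤ) < (N:ℤ) := by exact_mod_cast hN
  have hNne : (N:ℤ) ≠ 0 := hNpos.ne'
  set x : ℤ := (i:ℤ) - (π i : ℤ) with hx
  have hv0 : 0 ≤ x % N := Int.emod_nonneg x hNne
  have hvN : x % N < N := Int.emod_lt_of_pos x hNpos
  unfold circDist
  rw [hSβ]
  by_cases hb : β = 0
  · subst hb; push_cast; omega
  -- now β ≥ 1, so d = α - 1 ≥ 2 and α ≥ 3
  have hd2 : 2 ≤ α - 1 := by omega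
  have hα1 : 1 ≤ α := by omega
  set d : ℕ := α - 1 with hdd
  have hβ2 : 2 * β ≤ d ∧ β < d := by omega
  set D : ℤ := (d:ℤ) with hD
  have hDN : D ∣ (N:ℤ) := Int.natCast_dvd_natCast.mpr hdvd
  have hαD : (α:ℤ) = D + 1 := by rw [hD, hdd]; push_cast [hα1]; ring
  have hπi : (π i : ℤ) = ((α:ℤ)*(i:ℤ) + (β:ℤ)) % (N:ℤ) := by
    rw [hπ]; push_cast; ring_nf
  set x' : ℤ := (i:ℤ) - ((α:ℤ)*(i:ℤ) + (β:ℤ)) with hx'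
  have hmod : x % N = x' % N := by
    rw [hx, hπi, Int.sub_emod, Int.emod_emod_of_dvd _ dvd_rfl, ← Int.sub_emod]
  have h2 : D ∣ x' + (β:ℤ) := ⟨-(i:ℤ), by rw [hx', hαD]; ring⟩
  have h3 : D ∣ x' % N - x' := by
    have he : (N:ℤ) * (x' / N) + x' % N = x' := Int.mul_ediv_add_emod x' N
    have : x' % N - x' = -((N:ℤ) * (x' / N)) := by linarith
    rw [this]
    exact dvd_neg.mpr (Dvd.dvd.mul_right hDN _)
  have hvβ : D ∣ x % N + (β:ℤ) := by
    rw [hmod]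
    have := dvd_add h3 h2
    have heq : x' % N - x' + (x' + (β:ℤ)) = x' % N + β := by ring
    rwa [heq] at this
  set v : ℤ := x % N with hv
  have hBpos : (1:ℤ) ≤ (β:ℤ) := by exact_mod_cast Nat.one_le_iff_ne_zero.mpr hb
  have h2B : 2 * (β:ℤ) ≤ D ∧ (β:ℤ) < D := by
    constructor <;> exact_mod_cast (by omega : _)
  have h4 : D ≤ v + (β:ℤ) := Int.le_of_dvd (by omega) hvβ
  have h5 : D ∣ (N:ℤ) - v - (β:ℤ) := by
    have := dvd_sub hDN hvβ
    have heq : (N:ℤ) - (v + β) = (N:ℤ) - v - β := by ring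
    rwa [heq] at this
  have hleft : (β:ℤ) ≤ v := by omega
  have hright : (β:ℤ) ≤ (N:ℤ) - v := by
    rcases eq_or_ne ((N:ℤ) - v - (β:ℤ)) 0 with h | h
    · omega
    · rcases lt_or_gt_of_ne h with hneg | hpos
      · have : D ≤ -((N:ℤ) - v - β) := Int.le_of_dvd (by omega) (dvd_neg.mpr h5)
        omega
      · have : D ≤ (N:ℤ) - v - β := Int.le_of_dvd hpos h5
        omega
  omega
end
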